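/- arXiv:1905.01690 — 3 statements merged into one kernel-verified Lean document; each statement's English description precedes it below -/
import Mathlib

section
/- Let f be analytic on the unit disk 𝔻 with f(0) = 0, f'(0) = 1, and f(z) ≠ 0 for z ∈ 𝔻 \ {0}. Suppose |(z/f(z))²·f'(z) − 1| < λ for all z ∈ 𝔻, where λ ∈ (0, 1/2]. Then f is injective on 𝔻. -/
/-! With `ψ = 1/f - 1/z`, analytic on the disk, one has `z² ψ' = 1 - (z/f)² f'`, so `‖z² ψ'‖ < λ`.
The maximum modulus principle on circles `‖z‖ = ρ → 1` removes the double zero and gives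
`‖ψ'‖ ≤ λ`, so `ψ` is `λ`-Lipschitz on the disk. If `f z₁ = f z₂` with `z₁ ≠ z₂`, then
`1/z₁ - 1/z₂ = ψ z₂ - ψ z₁`, whereas `‖1/z₁ - 1/z₂‖ = ‖z₁ - z₂‖ / (‖z₁‖ ‖z₂‖) > ‖z₁ - z₂‖`. -/

open Metric Complex

open Filter Set Topology

/-- The function `z ↦ 1 / f z - 1 / z`, extended across its removable singularity at `0`: it is
`dslope g 0` for `g z = z / f z`, itself extended across `0` as `(dslope f 0)⁻¹`. -/
noncomputable def invSubInv (f : ℂ → ℂ) : ℂ → ℂ :=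
  dslope (fun z => (dslope f 0 z)⁻¹) 0

section invSubInv

variable {f : ℂ → ℂ}

theorem invSubInv_of_ne_zero (hf0 : f 0 = 0) (hf1 : deriv f 0 = 1) {z : ℂ} (hz : z ≠ 0) :
    invSubInv f z = (f z)⁻¹ - z⁻¹ := by
  simp only [invSubInv, dslope_of_ne _ hz, dslope_same, slope_def_field, hf0, hf1, sub_zero]
  field_simp

theorem differentiableOn_invSubInv {s : Set ℂ} (hs : s ∈ 𝓝 0) (hd : DifferentiableOn ℂ f s)
    (hf0 : f 0 = 0) (hf1 : deriv f 0 ≠ 0) (hfne : ∀ z ∈ s, z ≠ 0 → f z ≠ 0) :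
    DifferentiableOn ℂ (invSubInv f) s := by
  have hslope_ne : ∀ z ∈ s, dslope f 0 z ≠ 0 := by
    intro z hz
    rcases eq_or_ne z 0 with rfl | hz0
    · simpa using hf1
    · simpa [dslope_of_ne _ hz0, slope_def_field, hf0] using ⟨hfne z hz hz0, hz0⟩
  refine (differentiableOn_dslope hs).2 fun z hz => ?_
  exact ((differentiableOn_dslope hs).2 hd z hz).inv (hslope_ne z hz)

theorem sq_mul_deriv_invSubInv (hf0 : f 0 = 0) (hf1 : deriv f 0 = 1) {z : ℂ} (hz : z ≠ 0)
    (hd : DifferentiableAt ℂ f z) (hfz : f z ≠ 0) :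
    z ^ 2 * deriv (invSubInv f) z = 1 - (z / f z) ^ 2 * deriv f z := by
  have heq : invSubInv f =ᶠ[𝓝 z] fun w => (f w)⁻¹ - w⁻¹ := by
    filter_upwards [isOpen_compl_singleton.mem_nhds hz] with w hw
    exact invSubInv_of_ne_zero hf0 hf1 hw
  rw [heq.deriv_eq, (hd.hasDerivAt.fun_inv hfz |>.fun_sub (hasDerivAt_inv hz)).deriv]
  field_simp
  ring

end invSubInv

theorem norm_le_div_sq_of_norm_sq_mul_le {u : ℂ → ℂ} {r M : ℝ}
    (hu : DifferentiableOn ℂ u (ball 0 r))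
    (hM : ∀ z ∈ ball (0 : ℂ) r, z ≠ 0 → ‖z ^ 2 * u z‖ ≤ M) {z : ℂ} (hz : z ∈ ball (0 : ℂ) r) :
    ‖u z‖ ≤ M / r ^ 2 := by
  have hzr : ‖z‖ < r := mem_ball_zero_iff.1 hz
  have hbound : ∀ ρ ∈ Ioo ‖z‖ r, ‖u z‖ ≤ M / ρ ^ 2 := by
    rintro ρ ⟨hzρ, hρr⟩
    have hρ : 0 < ρ := (norm_nonneg z).trans_lt hzρ
    refine norm_le_of_forall_mem_frontier_norm_le isBounded_ball
      (hu.diffContOnCl_ball (closedBall_subset_ball hρr)) ?_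
      (subset_closure (mem_ball_zero_iff.2 hzρ))
    intro w hw
    rw [frontier_ball 0 hρ.ne', mem_sphere_zero_iff_norm] at hw
    have hwr : w ∈ ball (0 : ℂ) r := mem_ball_zero_iff.2 (hw ▸ hρr)
    have hw0 : w ≠ 0 := norm_pos_iff.1 (hw ▸ hρ)
    have := hM w hwr hw0
    rw [norm_mul, norm_pow, hw] at this
    rw [le_div_iff₀ (by positivity)]
    linarith
  have hlim : Tendsto (fun ρ : ℝ => M / ρ ^ 2) (𝓝[<] r) (𝓝 (M / r ^ 2)) :=
    ((continuousAt_const.div (continuousAt_pow r 2)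
      (pow_ne_zero 2 ((norm_nonneg z).trans_lt hzr).ne')).tendsto).mono_left nhdsWithin_le_nhds
  exact ge_of_tendsto hlim (eventually_of_mem (Ioo_mem_nhdsLT hzr) hbound)

theorem norm_sub_lt_norm_inv_sub_inv {z₁ z₂ : ℂ} (h₁ : z₁ ∈ ball (0 : ℂ) 1)
    (h₂ : z₂ ∈ ball (0 : ℂ) 1) (hz₁ : z₁ ≠ 0) (hz₂ : z₂ ≠ 0) (hne : z₁ ≠ z₂) :
    ‖z₁ - z₂‖ < ‖z₁⁻¹ - z₂⁻¹‖ := by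
  rw [mem_ball_zero_iff] at h₁ h₂
  have hpos : 0 < ‖z₁ - z₂‖ := norm_pos_iff.2 (sub_ne_zero.2 hne)
  have hprod : ‖z₁‖ * ‖z₂‖ < 1 := mul_lt_one_of_nonneg_of_lt_one_left (norm_nonneg _) h₁ h₂.le
  rw [inv_sub_inv hz₁ hz₂, norm_div, norm_mul, norm_sub_rev z₂, lt_div_iff₀ (by positivity)]
  nlinarith

theorem injOn_ball_of_norm_invSubInv_sub_le {f : ℂ → ℂ} {lam : ℝ} (hlam : lam ≤ 1)
    (hf0 : f 0 = 0) (hf1 : deriv f 0 = 1)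
    (hfne : ∀ z ∈ ball (0 : ℂ) 1, z ≠ 0 → f z ≠ 0)
    (hlip : ∀ z₁ ∈ ball (0 : ℂ) 1, ∀ z₂ ∈ ball (0 : ℂ) 1,
      ‖invSubInv f z₂ - invSubInv f z₁‖ ≤ lam * ‖z₂ - z₁‖) :
    InjOn f (ball (0 : ℂ) 1) := by
  intro z₁ h₁ z₂ h₂ hf
  by_contra hne
  have hz₁ : z₁ ≠ 0 := by
    rintro rfl
    exact hfne z₂ h₂ (Ne.symm hne) (hf ▸ hf0)
  have hz₂ : z₂ ≠ 0 := by
    rintro rfl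
    exact hfne z₁ h₁ hz₁ (hf.trans hf0)
  have hinv : z₁⁻¹ - z₂⁻¹ = invSubInv f z₂ - invSubInv f z₁ := by
    rw [invSubInv_of_ne_zero hf0 hf1 hz₁, invSubInv_of_ne_zero hf0 hf1 hz₂, hf]
    ring
  have hlt := norm_sub_lt_norm_inv_sub_inv h₁ h₂ hz₁ hz₂ hne
  rw [hinv, norm_sub_rev z₁] at hlt
  nlinarith [hlip z₁ h₁ z₂ h₂, norm_nonneg (z₂ - z₁)]

theorem stmt_5_general (f : ℂ → ℂ) (lam : ℝ)
    (hlam1 : lam ≤ 1 / 2)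
    (hdiff : DifferentiableOn ℂ f (ball (0:ℂ) 1))
    (hf0 : f 0 = 0) (hf1 : deriv f 0 = 1)
    (hfne : ∀ z ∈ ball (0:ℂ) 1, z ≠ 0 → f z ≠ 0)
    (hU : ∀ z ∈ ball (0:ℂ) 1, z ≠ 0 → ‖(z / f z) ^ 2 * deriv f z - 1‖ < lam) :
    Set.InjOn f (ball (0:ℂ) 1) := by
  have hψ : DifferentiableOn ℂ (invSubInv f) (ball 0 1) :=
    differentiableOn_invSubInv (ball_mem_nhds 0 one_pos) hdiff hf0 (hf1 ▸ one_ne_zero) hfne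
  have hderiv : ∀ z ∈ ball (0 : ℂ) 1, ‖deriv (invSubInv f) z‖ ≤ lam := by
    intro z hz
    suffices ∀ w ∈ ball (0 : ℂ) 1, w ≠ 0 → ‖w ^ 2 * deriv (invSubInv f) w‖ ≤ lam by
      simpa using norm_le_div_sq_of_norm_sq_mul_le (hψ.deriv isOpen_ball) this hz
    intro w hw hw0
    rw [sq_mul_deriv_invSubInv hf0 hf1 hw0 (hdiff.differentiableAt (isOpen_ball.mem_nhds hw))
      (hfne w hw hw0), norm_sub_rev]
    exact (hU w hw hw0).le
  refine injOn_ball_of_norm_invSubInv_sub_le (by linarith) hf0 hf1 hfne fun z₁ h₁ z₂ h₂ => ?_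
  exact (convex_ball 0 1).norm_image_sub_le_of_norm_deriv_le
    (fun w hw => hψ.differentiableAt (isOpen_ball.mem_nhds hw)) hderiv h₁ h₂

theorem stmt_5 (f : ℂ → ℂ) (lam : ℝ)
    (hlam0 : 0 < lam) (hlam1 : lam ≤ 1 / 2)
    (hdiff : DifferentiableOn ℂ f (ball (0:ℂ) 1))
    (hf0 : f 0 = 0) (hf1 : deriv f 0 = 1)
    (hfne : ∀ z ∈ ball (0:ℂ) 1, z ≠ 0 → f z ≠ 0)
    (hU : ∀ z ∈ ball (0:ℂ) 1, z ≠ 0 → ‖(z / f z) ^ 2 * deriv f z - 1‖ < lam) :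
    Set.InjOn f (ball (0:ℂ) 1) :=
  stmt_5_general f lam hlam1 hdiff hf0 hf1 hfne hU
end

section
/- Let λ ∈ (0,1] and a ∈ ℂ with 0 < |a| < 1. There exists z₁ ∈ 𝔻 with z₁²/(1 + conj(a)·z₁²) = −1/(λ(1−|a|²)) if and only if |λ(1−|a|²) + conj(a)| > 1. -/
/-! With `C = λ(1 - |a|²) ≠ 0`, clearing denominators turns the equation into
`z² (C + conj a) = -1`, and `z² = -1 / (C + conj a)` has a root in the unit disk
exactly when `|C + conj a| > 1`. -/

open Metric Complex

theorem div_one_add_mul_eq_neg_one_div_iff {C b z : ℂ} (hC : C ≠ 0) :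
    z ^ 2 / (1 + b * z ^ 2) = -1 / C ↔ z ^ 2 * (C + b) = -1 := by
  constructor
  · intro h
    have hD : 1 + b * z ^ 2 ≠ 0 := by
      rintro hD
      rw [hD, div_zero, eq_comm, div_eq_zero_iff] at h
      simp_all
    rw [div_eq_div_iff hD hC] at h
    linear_combination h
  · intro h
    have hz : z ≠ 0 := by
      rintro rfl
      simp at h
    have hD : 1 + b * z ^ 2 = -C * z ^ 2 := by linear_combination h
    rw [hD]
    field_simp

theorem exists_mem_ball_pow_mul_eq_iff {n : ℕ} {S w : ℂ} (hn : n ≠ 0) (hw : w ≠ 0) :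
    (∃ z ∈ ball (0 : ℂ) 1, z ^ n * S = w) ↔ ‖w‖ < ‖S‖ := by
  simp only [mem_ball, dist_zero_right]
  constructor
  · rintro ⟨z, hz, rfl⟩
    have hS : S ≠ 0 := by
      rintro rfl
      simp at hw
    rw [norm_mul, norm_pow]
    exact mul_lt_of_lt_one_left (norm_pos_iff.mpr hS) (pow_lt_one₀ (norm_nonneg z) hz hn)
  · intro h
    have hS : S ≠ 0 := norm_pos_iff.mp ((norm_nonneg w).trans_lt h)
    obtain ⟨z, hz⟩ := IsAlgClosed.exists_pow_nat_eq (w / S) (Nat.pos_of_ne_zero hn)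
    refine ⟨z, ?_, by rw [hz, div_mul_cancel₀ w hS]⟩
    have hzn : ‖z‖ ^ n < 1 := by
      rwa [← norm_pow, hz, norm_div, div_lt_one (norm_pos_iff.mpr hS)]
    exact (pow_lt_one_iff_of_nonneg (norm_nonneg z) hn).mp hzn

theorem stmt_6_general (lam : ℝ) (a : ℂ)
    (hlam0 : 0 < lam)
    (ha1 : ‖a‖ < 1) :
    (∃ z₁ ∈ ball (0:ℂ) 1,
        z₁ ^ 2 / (1 + (starRingEnd ℂ a) * z₁ ^ 2)
          = -1 / ((lam : ℂ) * ((1 - ‖a‖ ^ 2 : ℝ) : ℂ)))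
      ↔ 1 < ‖((lam * (1 - ‖a‖ ^ 2) : ℝ) : ℂ) + (starRingEnd ℂ a)‖ := by
  have hC : ((lam * (1 - ‖a‖ ^ 2) : ℝ) : ℂ) ≠ 0 := by
    have : ‖a‖ ^ 2 < 1 := pow_lt_one₀ (norm_nonneg a) ha1 two_ne_zero
    exact_mod_cast (mul_pos hlam0 (sub_pos.mpr this)).ne'
  rw [← ofReal_mul]
  simp_rw [div_one_add_mul_eq_neg_one_div_iff hC]
  simpa using exists_mem_ball_pow_mul_eq_iff two_ne_zero (neg_ne_zero.mpr one_ne_zero)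

theorem stmt_6 (lam : ℝ) (a : ℂ)
    (hlam0 : 0 < lam) (hlam1 : lam ≤ 1)
    (ha0 : 0 < ‖a‖) (ha1 : ‖a‖ < 1) :
    (∃ z₁ ∈ ball (0:ℂ) 1,
        z₁ ^ 2 / (1 + (starRingEnd ℂ a) * z₁ ^ 2)
          = -1 / ((lam : ℂ) * ((1 - ‖a‖ ^ 2 : ℝ) : ℂ)))
      ↔ 1 < ‖((lam * (1 - ‖a‖ ^ 2) : ℝ) : ℂ) + (starRingEnd ℂ a)‖ :=
  stmt_6_general lam a hlam0 ha1
end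

section
/- Let λ > 0, μ ∈ ℂ with |1−μ| < λ, and set a = (1−μ)/λ. Let f be analytic on 𝔻 with f(0)=0, f'(0)=1, f(z) ≠ 0 for z ≠ 0, and suppose |(z/f(z))²f'(z) − μ| < λ on 𝔻. Write z/f(z) = 1 + ∑_{k=1}^∞ b_k z^k (Taylor expansion at 0, valid near 0 and hence with these coefficients). Then for every k ≥ 2, |b_k| ≤ (λ/(k−1))·(1 − |1−μ|²/λ²). -/
/-!
On the disk, `G(z) = z/f(z) = ∑ bₙ zⁿ` satisfies `G - z G' = (z/f)² f'`, so by hypothesis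
`G - z G'` maps the disk into the closed disk of centre `μ` and radius `λ`; its Taylor
coefficients are `(1 - n) bₙ`, with constant term `1`. It therefore suffices to prove the
coefficient inequality `|cₖ| ≤ R (1 - (|c₀ - w| / R)²)` for a power series mapping the unit disk
into `closedBall w R`. Averaging over the rotations by `k`-th roots of unity keeps only the
coefficients `c_{mk}`: the function `H(zᵏ) = ∑ c_{mk} z^{mk}` is such an average, hence again maps
into `closedBall w R`, and `H(0) = c₀`, `H'(0) = cₖ`. The Schwarz–Pick bound at the origin,
obtained from the Schwarz lemma after composing with a disk automorphism, finishes the proof.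
-/

open Metric Complex ComplexConjugate Set Finset FormalMultilinearSeries

lemma norm_sub_le_norm_one_sub_conj_mul {a w : ℂ} (ha : ‖a‖ ≤ 1) (hw : ‖w‖ ≤ 1) :
    ‖a - w‖ ≤ ‖1 - conj a * w‖ := by
  have key : normSq (1 - conj a * w) - normSq (a - w) = (1 - normSq a) * (1 - normSq w) := by
    simp only [normSq_apply, sub_re, sub_im, mul_re, mul_im, conj_re, conj_im, one_re, one_im]
    ring
  have ha' : normSq a ≤ 1 := by rw [normSq_eq_norm_sq]; nlinarith [norm_nonneg a]
  have hw' : normSq w ≤ 1 := by rw [normSq_eq_norm_sq]; nlinarith [norm_nonneg w]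
  rw [norm_def, norm_def]
  exact Real.sqrt_le_sqrt (by nlinarith)

lemma one_sub_conj_mul_ne_zero {a w : ℂ} (ha : ‖a‖ < 1) (hw : ‖w‖ ≤ 1) :
    1 - conj a * w ≠ 0 := by
  rw [sub_ne_zero]
  intro h
  have : ‖conj a * w‖ < 1 := by
    rw [norm_mul, RCLike.norm_conj]
    exact lt_of_le_of_lt (mul_le_of_le_one_right (norm_nonneg a) hw) ha
  rw [← h, norm_one] at this
  exact this.false

theorem norm_deriv_zero_le_of_mapsTo_closedBall_one {F : ℂ → ℂ}
    (hd : DifferentiableOn ℂ F (ball 0 1)) (hF : MapsTo F (ball 0 1) (closedBall 0 1))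
    (h0 : ‖F 0‖ < 1) : ‖deriv F 0‖ ≤ 1 - ‖F 0‖ ^ 2 := by
  have hFle : ∀ z ∈ ball (0 : ℂ) 1, ‖F z‖ ≤ 1 := fun z hz => mem_closedBall_zero_iff.mp (hF hz)
  have hden : ∀ z ∈ ball (0 : ℂ) 1, 1 - conj (F 0) * F z ≠ 0 := fun z hz =>
    one_sub_conj_mul_ne_zero h0 (hFle z hz)
  set φ : ℂ → ℂ := fun z => (F 0 - F z) / (1 - conj (F 0) * F z)
  have hφd : DifferentiableOn ℂ φ (ball 0 1) :=
    ((differentiableOn_const _).sub hd).div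
      ((differentiableOn_const 1).sub ((differentiableOn_const _).mul hd)) hden
  have hφ : MapsTo φ (ball 0 1) (closedBall (φ 0) 1) := fun z hz => by
    rw [mem_closedBall, show φ 0 = 0 by simp [φ], dist_zero_right, norm_div,
      div_le_one (norm_pos_iff.mpr (hden z hz))]
    exact norm_sub_le_norm_one_sub_conj_mul h0.le (hFle z hz)
  have hpos : 0 < 1 - ‖F 0‖ ^ 2 := by nlinarith [norm_nonneg (F 0)]
  have hu : 1 - conj (F 0) * F 0 = ((1 - ‖F 0‖ ^ 2 : ℝ) : ℂ) := by
    rw [mul_comm, mul_conj, normSq_eq_norm_sq]; push_cast; ring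
  have hFd : HasDerivAt F (deriv F 0) 0 :=
    (hd.differentiableAt (ball_mem_nhds 0 one_pos)).hasDerivAt
  have hφ' : HasDerivAt φ (-deriv F 0 / ((1 - ‖F 0‖ ^ 2 : ℝ) : ℂ)) 0 := by
    have hu0 := hden 0 (mem_ball_self one_pos)
    refine ((hFd.const_sub _).div ((hFd.const_mul _).const_sub 1) hu0).congr_deriv ?_
    rw [← hu, sub_self, zero_mul, sub_zero]
    field_simp
  have := norm_deriv_le_one_of_mapsTo_ball hφd hφ one_pos
  rwa [hφ'.deriv, norm_div, norm_neg, norm_real, Real.norm_of_nonneg hpos.le,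
    div_le_one hpos] at this

theorem norm_deriv_zero_le_of_mapsTo_closedBall {F : ℂ → ℂ} {w : ℂ} {R : ℝ}
    (hd : DifferentiableOn ℂ F (ball 0 1)) (hF : MapsTo F (ball 0 1) (closedBall w R))
    (h0 : dist (F 0) w < R) : ‖deriv F 0‖ ≤ R * (1 - (dist (F 0) w / R) ^ 2) := by
  have hR : 0 < R := dist_nonneg.trans_lt h0
  have hscale : ∀ z, ‖(F z - w) / R‖ = dist (F z) w / R := fun z => by
    rw [norm_div, norm_real, Real.norm_of_nonneg hR.le, dist_eq_norm]
  have key := norm_deriv_zero_le_of_mapsTo_closedBall_one (F := fun z => (F z - w) / R)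
    ((hd.sub_const w).div_const _)
    (fun z hz => by
      rw [mem_closedBall_zero_iff, hscale, div_le_one hR]; exact hF hz)
    (by rw [hscale, div_lt_one hR]; exact h0)
  rw [deriv_div_const, deriv_sub_const, hscale, norm_div, norm_real,
    Real.norm_of_nonneg hR.le, div_le_iff₀ hR] at key
  linarith

lemma hasSum_coeff_mul_zero_pow (c : ℕ → ℂ) : HasSum (fun n => c n * 0 ^ n) (c 0) := by
  convert hasSum_single (f := fun n => c n * (0 : ℂ) ^ n) 0 fun n hn => by simp [hn] using 1
  simp

section UnitDiskSeries

variable {c : ℕ → ℂ} {F : ℂ → ℂ}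

lemma one_le_radius_ofScalars (hc : ∀ z ∈ ball (0 : ℂ) 1, Summable fun n => c n * z ^ n) :
    1 ≤ (ofScalars ℂ c).radius := by
  refine ENNReal.le_of_forall_nnreal_lt fun r hr => ?_
  have hr1 : (r : ℝ) < 1 := by exact_mod_cast hr
  have hmem : ((r : ℝ) : ℂ) ∈ ball (0 : ℂ) 1 := by
    rwa [mem_ball_zero_iff, norm_real, Real.norm_of_nonneg r.coe_nonneg]
  refine le_radius_of_tendsto _ (l := 0) ?_
  have h := (hc _ hmem).tendsto_atTop_zero.norm
  simp only [norm_mul, norm_pow, norm_real, Real.norm_of_nonneg r.coe_nonneg, norm_zero] at h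
  simpa only [ofScalars_norm] using h

lemma hasFPowerSeriesOnBall_ofScalars_of_hasSum
    (hsum : ∀ z ∈ ball (0 : ℂ) 1, HasSum (fun n => c n * z ^ n) (F z)) :
    HasFPowerSeriesOnBall F (ofScalars ℂ c) 0 1 where
  r_le := one_le_radius_ofScalars fun z hz => (hsum z hz).summable
  r_pos := one_pos
  hasSum {y} hy := by
    rw [← ENNReal.ofReal_one, eball_ofReal] at hy
    simpa [ofScalars_apply_eq, mul_comm] using hsum y hy

lemma differentiableOn_of_hasSum
    (hsum : ∀ z ∈ ball (0 : ℂ) 1, HasSum (fun n => c n * z ^ n) (F z)) :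
    DifferentiableOn ℂ F (ball 0 1) := by
  simpa [← ENNReal.ofReal_one, eball_ofReal] using
    (hasFPowerSeriesOnBall_ofScalars_of_hasSum hsum).differentiableOn

lemma deriv_zero_of_hasSum
    (hsum : ∀ z ∈ ball (0 : ℂ) 1, HasSum (fun n => c n * z ^ n) (F z)) : deriv F 0 = c 1 := by
  simp [(hasFPowerSeriesOnBall_ofScalars_of_hasSum hsum).hasFPowerSeriesAt.deriv]

lemma hasSum_mul_deriv_of_hasSum
    (hsum : ∀ z ∈ ball (0 : ℂ) 1, HasSum (fun n => c n * z ^ n) (F z)) {z : ℂ}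
    (hz : z ∈ ball (0 : ℂ) 1) : HasSum (fun n => n * c n * z ^ n) (z * deriv F z) := by
  have hz' : z ∈ eball (0 : ℂ) 1 := by rwa [← ENNReal.ofReal_one, eball_ofReal]
  have h := (ContinuousLinearMap.apply ℂ ℂ z).hasSum
    ((hasFPowerSeriesOnBall_ofScalars_of_hasSum hsum).fderiv.hasSum hz')
  simp only [ContinuousLinearMap.apply_apply, derivSeries_apply_diag, ofScalars_apply_eq, zero_add,
    fderiv_eq_smul_deriv, smul_eq_mul, nsmul_eq_mul] at h
  have h' := (hasSum_nat_add_iff (f := fun n : ℕ => n * c n * z ^ n) 1).mp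
    (by convert h using 2 with n; push_cast; ring)
  simpa using h'

lemma sum_pow_pow_eq_ite {K : Type*} [Field K] {ζ : K} {k : ℕ} (hζ : IsPrimitiveRoot ζ k)
    (n : ℕ) : ∑ j ∈ range k, (ζ ^ n) ^ j = if k ∣ n then (k : K) else 0 := by
  by_cases hkn : k ∣ n
  · simp [hkn, (hζ.pow_eq_one_iff_dvd n).mpr hkn]
  · have hne : ζ ^ n ≠ 1 := fun h => hkn ((hζ.pow_eq_one_iff_dvd n).mp h)
    rw [if_neg hkn, geom_sum_eq hne, ← pow_mul, mul_comm, pow_mul, hζ.pow_eq_one, one_pow,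
      sub_self, zero_div]

lemma IsPrimitiveRoot.pow_mul_mem_ball {ζ z : ℂ} {k : ℕ} {r : ℝ} (hζ : IsPrimitiveRoot ζ k)
    (hk : k ≠ 0) (hz : z ∈ ball (0 : ℂ) r) (j : ℕ) : ζ ^ j * z ∈ ball (0 : ℂ) r := by
  rwa [mem_ball_zero_iff, norm_mul, norm_pow, hζ.norm'_eq_one hk, one_pow, one_mul,
    ← mem_ball_zero_iff]

lemma hasSum_coeff_mul_eq_average_rotations
    (hsum : ∀ z ∈ ball (0 : ℂ) 1, HasSum (fun n => c n * z ^ n) (F z)) {ζ : ℂ} {k : ℕ}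
    (hζ : IsPrimitiveRoot ζ k) (hk : k ≠ 0) {z : ℂ} (hz : z ∈ ball (0 : ℂ) 1) :
    HasSum (fun m => c (m * k) * (z ^ k) ^ m) ((k : ℂ)⁻¹ * ∑ j ∈ range k, F (ζ ^ j * z)) := by
  have hS := hasSum_sum fun j (_ : j ∈ range k) => hsum _ (hζ.pow_mul_mem_ball hk hz j)
  have hterm : ∀ n, ∑ j ∈ range k, c n * (ζ ^ j * z) ^ n
      = if k ∣ n then (k : ℂ) * (c n * z ^ n) else 0 := fun n => by
    simp_rw [mul_pow, ← pow_mul, mul_comm _ n, pow_mul, mul_comm _ (z ^ n), ← mul_assoc,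
      ← Finset.mul_sum, sum_pow_pow_eq_ite hζ n]
    split_ifs <;> ring
  simp only [hterm] at hS
  have hinj : Function.Injective (fun m : ℕ => m * k) := fun _ _ h =>
    Nat.eq_of_mul_eq_mul_right (Nat.pos_of_ne_zero hk) h
  rw [← hinj.hasSum_iff fun n hn => if_neg fun ⟨m, hm⟩ => hn ⟨m, by simp [hm, mul_comm]⟩] at hS
  refine (hS.mul_left (k : ℂ)⁻¹).congr_fun fun m => ?_
  rw [Function.comp_apply, if_pos (dvd_mul_left k m), ← pow_mul, mul_comm k m,
    inv_mul_cancel_left₀ (Nat.cast_ne_zero.mpr hk)]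

theorem norm_coeff_le_of_mapsTo_closedBall
    (hsum : ∀ z ∈ ball (0 : ℂ) 1, HasSum (fun n => c n * z ^ n) (F z)) {w : ℂ} {R : ℝ}
    (hF : MapsTo F (ball 0 1) (closedBall w R)) (h0 : dist (c 0) w < R) {k : ℕ} (hk : k ≠ 0) :
    ‖c k‖ ≤ R * (1 - (dist (c 0) w / R) ^ 2) := by
  have hζ := isPrimitiveRoot_exp k hk
  have hH : ∀ u ∈ ball (0 : ℂ) 1, HasSum (fun m => c (m * k) * u ^ m)
      (∑' m, c (m * k) * u ^ m) ∧ ∑' m, c (m * k) * u ^ m ∈ closedBall w R := fun u hu => by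
    obtain ⟨z, rfl⟩ := IsAlgClosed.exists_pow_nat_eq u (Nat.pos_of_ne_zero hk)
    have hz : z ∈ ball (0 : ℂ) 1 := by
      rw [mem_ball_zero_iff, norm_pow] at hu
      exact mem_ball_zero_iff.mpr ((pow_lt_one_iff_of_nonneg (norm_nonneg z) hk).mp hu)
    have h := hasSum_coeff_mul_eq_average_rotations hsum hζ hk hz
    refine ⟨h.summable.hasSum, h.tsum_eq ▸ ?_⟩
    have := (convex_closedBall w R).sum_mem (t := range k) (w := fun _ => (k : ℝ)⁻¹)
      (fun _ _ => by positivity) (by simp [hk]) fun j _ => hF (hζ.pow_mul_mem_ball hk hz j)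
    convert this using 1
    simp [Finset.mul_sum, real_smul]
  have hH0 : ∑' m, c (m * k) * (0 : ℂ) ^ m = c 0 := by
    simpa using (hasSum_coeff_mul_zero_pow fun m => c (m * k)).tsum_eq
  have key := norm_deriv_zero_le_of_mapsTo_closedBall
    (differentiableOn_of_hasSum fun u hu => (hH u hu).1) (fun u hu => (hH u hu).2)
    (by rwa [hH0])
  rwa [deriv_zero_of_hasSum fun u hu => (hH u hu).1, one_mul, hH0] at key

end UnitDiskSeries

lemma sub_mul_deriv_eq_sq_mul_deriv {G f : ℂ → ℂ} {z : ℂ}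
    (hGf : G =ᶠ[nhds z] fun w => w / f w) (hf : DifferentiableAt ℂ f z) (hfz : f z ≠ 0) :
    G z - z * deriv G z = (z / f z) ^ 2 * deriv f z := by
  have h : HasDerivAt (fun w => w / f w) ((1 * f z - z * deriv f z) / f z ^ 2) z :=
    (hasDerivAt_id' z).div hf.hasDerivAt hfz
  rw [hGf.eq_of_nhds, hGf.deriv_eq, h.deriv]
  field_simp
  ring

lemma norm_one_sub_natCast_mul {k : ℕ} (hk : 1 ≤ k) (x : ℂ) :
    ‖(1 - k) * x‖ = (k - 1) * ‖x‖ := by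
  rw [norm_mul, ← norm_neg, neg_sub, show (k : ℂ) - 1 = ((k - 1 : ℝ) : ℂ) by push_cast; ring,
    norm_real, Real.norm_of_nonneg (by simpa using hk)]

theorem stmt_8_general (lam : ℝ) (μ : ℂ) (f : ℂ → ℂ) (b : ℕ → ℂ)
    (hμ : ‖1 - μ‖ < lam)
    (hdiff : DifferentiableOn ℂ f (ball (0:ℂ) 1))
    (hfne : ∀ z ∈ ball (0:ℂ) 1, z ≠ 0 → f z ≠ 0)
    (hU : ∀ z ∈ ball (0:ℂ) 1, z ≠ 0 → ‖(z / f z) ^ 2 * deriv f z - μ‖ < lam)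
    (hb0 : b 0 = 1)
    (hb : ∀ z ∈ ball (0:ℂ) 1, z ≠ 0 →
      HasSum (fun k : ℕ => b k * z ^ k) (z / f z)) :
    ∀ k : ℕ, 2 ≤ k →
      ‖b k‖ ≤ (lam / ((k : ℝ) - 1)) * (1 - ‖1 - μ‖ ^ 2 / lam ^ 2) := by
  intro k hk
  set G : ℂ → ℂ := fun z => ∑' n, b n * z ^ n
  have hG : ∀ z ∈ ball (0 : ℂ) 1, HasSum (fun n => b n * z ^ n) (G z) := fun z hz => by
    rcases eq_or_ne z 0 with rfl | hz0
    · exact (hasSum_coeff_mul_zero_pow b).summable.hasSum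
    · exact (hb z hz hz0).summable.hasSum
  have hG0 : G 0 = 1 := by simpa [hb0] using (hasSum_coeff_mul_zero_pow b).tsum_eq
  have hcoeff : ∀ z ∈ ball (0 : ℂ) 1,
      HasSum (fun n => (1 - n) * b n * z ^ n) (G z - z * deriv G z) := fun z hz =>
    ((hG z hz).sub (hasSum_mul_deriv_of_hasSum hG hz)).congr_fun fun n => by ring
  have hmaps : MapsTo (fun z => G z - z * deriv G z) (ball 0 1) (closedBall μ lam) := by
    intro z hz
    rcases eq_or_ne z 0 with rfl | hz0
    · simpa [hG0, dist_eq_norm] using hμ.le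
    have hGf : G =ᶠ[nhds z] fun w => w / f w :=
      Filter.eventuallyEq_of_mem ((isOpen_ball.inter isOpen_compl_singleton).mem_nhds ⟨hz, hz0⟩)
        fun w hw => (hG w hw.1).unique (hb w hw.1 hw.2)
    simp only [mem_closedBall, dist_eq_norm]
    rw [sub_mul_deriv_eq_sq_mul_deriv hGf
      (hdiff.differentiableAt (isOpen_ball.mem_nhds hz)) (hfne z hz hz0)]
    exact (hU z hz hz0).le
  have key := norm_coeff_le_of_mapsTo_closedBall hcoeff hmaps
    (by simpa [hb0, dist_eq_norm] using hμ) (k := k) (by omega)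
  have hk1 : (0 : ℝ) < k - 1 := sub_pos.mpr (Nat.one_lt_cast.mpr hk)
  simp only [norm_one_sub_natCast_mul (by omega : 1 ≤ k), CharP.cast_eq_zero, sub_zero, hb0,
    one_mul, dist_eq_norm, div_pow] at key
  rw [div_mul_eq_mul_div, le_div_iff₀ hk1]
  linarith

theorem stmt_8 (lam : ℝ) (μ : ℂ) (f : ℂ → ℂ) (b : ℕ → ℂ)
    (hlam : 0 < lam) (hμ : ‖1 - μ‖ < lam)
    (hdiff : DifferentiableOn ℂ f (ball (0:ℂ) 1))
    (hf0 : f 0 = 0) (hf1 : deriv f 0 = 1)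
    (hfne : ∀ z ∈ ball (0:ℂ) 1, z ≠ 0 → f z ≠ 0)
    (hU : ∀ z ∈ ball (0:ℂ) 1, z ≠ 0 → ‖(z / f z) ^ 2 * deriv f z - μ‖ < lam)
    (hb0 : b 0 = 1)
    (hb : ∀ z ∈ ball (0:ℂ) 1, z ≠ 0 →
      HasSum (fun k : ℕ => b k * z ^ k) (z / f z)) :
    ∀ k : ℕ, 2 ≤ k →
      ‖b k‖ ≤ (lam / ((k : ℝ) - 1)) * (1 - ‖1 - μ‖ ^ 2 / lam ^ 2) :=
  stmt_8_general lam μ f b hμ hdiff hfne hU hb0 hb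
end
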